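/- arXiv:1112.3777 — 3 statements merged into one kernel-verified Lean document; each statement's English description precedes it below -/
import Mathlib

section
/- Let λ > 0, t > 0 and H ∈ (1/2, 1). Then ∫_{−∞}^{0} e^{λu} ( ∫_{0}^{t} e^{−λ(t−v)} (v − u)^{2H−2} dv ) du = (1/2) ∫_{0}^{∞} e^{−λw} ( ∫_{|t−w|}^{t+w} x^{2H−2} dx ) dw, where all integrals are finite Lebesgue integrals. -/
open MeasureTheory Real Set

noncomputable def Lmap : (ℝ × ℝ) →L[ℝ] (ℝ × ℝ) :=
  ((-(2⁻¹:ℝ)) • (ContinuousLinearMap.fst ℝ ℝ ℝ) + (-(2⁻¹:ℝ)) • (ContinuousLinearMap.snd ℝ ℝ ℝ)).prod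
  ((-(2⁻¹:ℝ)) • (ContinuousLinearMap.fst ℝ ℝ ℝ) + ((2⁻¹:ℝ)) • (ContinuousLinearMap.snd ℝ ℝ ℝ))

lemma Lmap_apply (p : ℝ × ℝ) : Lmap p = ((-p.1 - p.2) / 2, (-p.1 + p.2) / 2) := by
  simp only [Lmap, ContinuousLinearMap.prod_apply, ContinuousLinearMap.add_apply,
    ContinuousLinearMap.coe_smul', Pi.smul_apply, ContinuousLinearMap.coe_fst',
    ContinuousLinearMap.coe_snd', smul_eq_mul]
  refine Prod.ext ?_ ?_ <;> simp <;> ring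

lemma Lmap_det : Lmap.det = -(1/2) := by
  have h : Lmap.det = LinearMap.det (Lmap : (ℝ × ℝ) →ₗ[ℝ] (ℝ × ℝ)) := rfl
  rw [h, ← LinearMap.det_toMatrix (Module.Basis.finTwoProd ℝ), Matrix.det_fin_two]
  have h0 : (Lmap : (ℝ × ℝ) →ₗ[ℝ] (ℝ × ℝ)) (Module.Basis.finTwoProd ℝ 0) = (-(1/2 : ℝ), -(1/2 : ℝ)) := by
    rw [Module.Basis.finTwoProd_zero]; show Lmap (1, 0) = _; rw [Lmap_apply]; norm_num
  have h1 : (Lmap : (ℝ × ℝ) →ₗ[ℝ] (ℝ × ℝ)) (Module.Basis.finTwoProd ℝ 1) = (-(1/2 : ℝ), (1/2 : ℝ)) := by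
    rw [Module.Basis.finTwoProd_one]; show Lmap (0, 1) = _; rw [Lmap_apply]; norm_num
  rw [LinearMap.toMatrix_apply, LinearMap.toMatrix_apply, LinearMap.toMatrix_apply,
    LinearMap.toMatrix_apply, h0, h1, Module.Basis.coe_finTwoProd_repr, Module.Basis.coe_finTwoProd_repr]
  norm_num

noncomputable def Phi (t : ℝ) (p : ℝ × ℝ) : ℝ × ℝ := ((t - p.1 - p.2) / 2, (t - p.1 + p.2) / 2)

lemma Phi_hasFDerivAt (t : ℝ) (p : ℝ × ℝ) : HasFDerivAt (Phi t) Lmap p := by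
  have heq : (fun q : ℝ × ℝ => ((t / 2, t / 2) : ℝ × ℝ) + Lmap q) = Phi t := by
    funext q
    rw [Lmap_apply, Prod.mk_add_mk]
    exact Prod.ext (by show t / 2 + (-q.1 - q.2) / 2 = _; unfold Phi; ring)
      (by show t / 2 + (-q.1 + q.2) / 2 = _; unfold Phi; ring)
  exact heq ▸ (Lmap.hasFDerivAt.const_add ((t / 2, t / 2) : ℝ × ℝ))

lemma Phi_inj (t : ℝ) : Function.Injective (Phi t) := by
  intro p q h
  have h1 : (t - p.1 - p.2) / 2 = (t - q.1 - q.2) / 2 := congrArg Prod.fst h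
  have h2 : (t - p.1 + p.2) / 2 = (t - q.1 + q.2) / 2 := congrArg Prod.snd h
  exact Prod.ext (by linarith) (by linarith)

def Tset (t : ℝ) : Set (ℝ × ℝ) := {p | |t - p.1| < p.2 ∧ p.2 < t + p.1}

lemma Tset_meas (t : ℝ) : MeasurableSet (Tset t) := by
  have : Tset t = {p : ℝ × ℝ | |t - p.1| < p.2} ∩ {p : ℝ × ℝ | p.2 < t + p.1} := rfl
  rw [this]
  exact (measurableSet_lt ((measurable_const.sub measurable_fst).abs) measurable_snd).inter
    (measurableSet_lt measurable_snd (measurable_const.add measurable_fst))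

lemma Phi_image {t : ℝ} (ht : 0 < t) : Phi t '' Tset t = (Iio (0:ℝ)) ×ˢ (Ioo (0:ℝ) t) := by
  ext p
  constructor
  · rintro ⟨⟨w, x⟩, ⟨h1, h2⟩, rfl⟩
    simp only at h1 h2
    rw [abs_lt] at h1
    obtain ⟨h1a, h1b⟩ := h1
    simp only [Phi, Set.mem_prod, mem_Iio, mem_Ioo]
    refine ⟨by linarith, by linarith, by linarith⟩
  · obtain ⟨u, v⟩ := p
    intro hp
    simp only [Set.mem_prod, mem_Iio, mem_Ioo] at hp
    obtain ⟨hu, hv1, hv2⟩ := hp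
    refine ⟨(t - u - v, v - u), ⟨?_, ?_⟩, ?_⟩
    · show |t - (t - u - v)| < v - u
      rw [abs_lt]; constructor <;> [linarith; linarith]
    · show v - u < t + (t - u - v); linarith
    · show ((t - (t - u - v) - (v - u)) / 2, (t - (t - u - v) + (v - u)) / 2) = (u, v)
      exact Prod.ext (by norm_num; ring) (by norm_num; ring)

noncomputable def Ffun (lam t H : ℝ) (p : ℝ × ℝ) : ℝ :=
  Real.exp (lam * p.1) * (Real.exp (-lam * (t - p.2)) * (p.2 - p.1) ^ (2 * H - 2))

noncomputable def Gfun (lam H : ℝ) (p : ℝ × ℝ) : ℝ :=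
  Real.exp (-lam * p.1) * p.2 ^ (2 * H - 2)

lemma Fcomp (lam t H : ℝ) (p : ℝ × ℝ) : Ffun lam t H (Phi t p) = Gfun lam H p := by
  unfold Ffun Gfun Phi
  simp only
  have h1 : (t - p.1 + p.2) / 2 - (t - p.1 - p.2) / 2 = p.2 := by ring
  rw [h1, ← mul_assoc, ← Real.exp_add]
  have h2 : lam * ((t - p.1 - p.2) / 2) + -lam * (t - (t - p.1 + p.2) / 2) = -lam * p.1 := by ring
  rw [h2]

-- integrability of exp on the negative half line
lemma expInt {lam : ℝ} (hlam : 0 < lam) :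
    IntegrableOn (fun u : ℝ => Real.exp (lam * u)) (Iio 0) := by
  have A : MeasurableEmbedding (fun x : ℝ => -x) :=
    (Homeomorph.neg ℝ).isClosedEmbedding.measurableEmbedding
  have hpre : (fun x : ℝ => -x) ⁻¹' (Iio (0:ℝ)) = Ioi 0 := by ext x; simp
  have hmap : (volume : Measure ℝ).restrict (Iio 0)
      = ((volume : Measure ℝ).restrict (Ioi 0)).map (fun x : ℝ => -x) := by
    conv_lhs => rw [← Measure.map_neg_eq_self (volume : Measure ℝ)]
    rw [Measure.restrict_map measurable_neg measurableSet_Iio, hpre]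
  rw [IntegrableOn, hmap, A.integrable_map_iff]
  have h := exp_neg_integrableOn_Ioi 0 hlam
  have : ((fun u : ℝ => Real.exp (lam * u)) ∘ fun x : ℝ => -x) = fun x : ℝ => Real.exp (-lam * x) := by
    funext x; simp [Function.comp, mul_neg, neg_mul]
  rw [this]
  exact h

lemma FintRect {lam t H : ℝ} (hlam : 0 < lam) (ht : 0 < t) (hH : H ∈ Set.Ioo (1 / 2 : ℝ) 1) :
    Integrable (Ffun lam t H)
      ((volume.restrict (Iio (0:ℝ))).prod (volume.restrict (Ioo (0:ℝ) t))) := by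
  obtain ⟨hH1, hH2⟩ := hH
  have hq1 : (-1:ℝ) < 2 * H - 2 := by linarith
  have hq2 : (2 * H - 2 : ℝ) ≤ 0 := by linarith
  have hrpowI : IntegrableOn (fun v : ℝ => v ^ (2 * H - 2)) (Ioo 0 t) := by
    have h := intervalIntegral.intervalIntegrable_rpow' (a := 0) (b := t) hq1
    rw [intervalIntegrable_iff_integrableOn_Ioc_of_le ht.le,
      integrableOn_Ioc_iff_integrableOn_Ioo] at h
    exact h
  have hbound : Integrable (fun p : ℝ × ℝ => Real.exp (lam * p.1) * p.2 ^ (2 * H - 2))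
      ((volume.restrict (Iio (0:ℝ))).prod (volume.restrict (Ioo (0:ℝ) t))) :=
    (expInt hlam).mul_prod hrpowI
  have hFmeas : Measurable (Ffun lam t H) := by
    have m1 : Measurable fun p : ℝ × ℝ => Real.exp (lam * p.1) := (measurable_fst.const_mul lam).exp
    have m2 : Measurable fun p : ℝ × ℝ => Real.exp (-lam * (t - p.2)) :=
      ((measurable_const.sub measurable_snd).const_mul (-lam)).exp
    have m3 : Measurable fun p : ℝ × ℝ => (p.2 - p.1) ^ (2 * H - 2) :=
      (measurable_snd.sub measurable_fst).pow_const _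
    exact m1.mul (m2.mul m3)
  refine hbound.mono' hFmeas.aestronglyMeasurable ?_
  rw [Measure.prod_restrict]
  filter_upwards [ae_restrict_mem (measurableSet_Iio.prod measurableSet_Ioo)] with p hp
  obtain ⟨hp1, hp2, hp3⟩ : p.1 < 0 ∧ 0 < p.2 ∧ p.2 < t := ⟨hp.1, hp.2.1, hp.2.2⟩
  have hsub : (0:ℝ) < p.2 - p.1 := by linarith
  have hFnn : 0 ≤ Ffun lam t H p := by
    unfold Ffun
    exact mul_nonneg (Real.exp_nonneg _)
      (mul_nonneg (Real.exp_nonneg _) (Real.rpow_nonneg hsub.le _))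
  rw [Real.norm_eq_abs, abs_of_nonneg hFnn]
  unfold Ffun
  have e1 : Real.exp (-lam * (t - p.2)) ≤ 1 := Real.exp_le_one_iff.mpr (by nlinarith)
  have e2 : (p.2 - p.1) ^ (2 * H - 2) ≤ p.2 ^ (2 * H - 2) :=
    Real.rpow_le_rpow_of_nonpos hp2 (by linarith) hq2
  have h3 : Real.exp (-lam * (t - p.2)) * (p.2 - p.1) ^ (2 * H - 2) ≤ p.2 ^ (2 * H - 2) := by
    calc Real.exp (-lam * (t - p.2)) * (p.2 - p.1) ^ (2 * H - 2)
        ≤ 1 * p.2 ^ (2 * H - 2) :=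
          mul_le_mul e1 e2 (Real.rpow_nonneg hsub.le _) one_pos.le
      _ = p.2 ^ (2 * H - 2) := one_mul _
  exact mul_le_mul_of_nonneg_left h3 (Real.exp_nonneg _)

/-- For `λ > 0`, `t > 0` and `H ∈ (1/2, 1)`,
`∫_{-∞}^{0} e^{λu} (∫_0^t e^{-λ(t-v)} (v-u)^{2H-2} dv) du
  = (1/2) ∫_0^∞ e^{-λw} (∫_{|t-w|}^{t+w} x^{2H-2} dx) dw`,
all integrals being finite Lebesgue integrals. -/
theorem fou_variogram_integral_identity
    (lam t H : ℝ) (hlam : 0 < lam) (ht : 0 < t) (hH : H ∈ Set.Ioo (1 / 2 : ℝ) 1) :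
    MeasureTheory.IntegrableOn
      (fun u : ℝ =>
        Real.exp (lam * u) * ∫ v in (0 : ℝ)..t, Real.exp (-lam * (t - v)) * (v - u) ^ (2 * H - 2))
      (Set.Iio (0 : ℝ)) ∧
    MeasureTheory.IntegrableOn
      (fun w : ℝ => Real.exp (-lam * w) * ∫ x in |t - w|..(t + w), x ^ (2 * H - 2))
      (Set.Ioi (0 : ℝ)) ∧
    (∫ u in Set.Iio (0 : ℝ),
        Real.exp (lam * u) * ∫ v in (0 : ℝ)..t, Real.exp (-lam * (t - v)) * (v - u) ^ (2 * H - 2))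
      = (1 / 2) *
        ∫ w in Set.Ioi (0 : ℝ), Real.exp (-lam * w) * ∫ x in |t - w|..(t + w), x ^ (2 * H - 2) := by
  have hder : ∀ p ∈ Tset t, HasFDerivWithinAt (Phi t) Lmap (Tset t) p :=
    fun p _ => (Phi_hasFDerivAt t p).hasFDerivWithinAt
  have hinj : Set.InjOn (Phi t) (Tset t) := (Phi_inj t).injOn
  have hFrect := FintRect hlam ht hH
  have hdet : |Lmap.det| = 1 / 2 := by
    rw [Lmap_det, abs_neg, abs_of_nonneg] ; norm_num
  have hvol : (volume : Measure (ℝ × ℝ)) = (volume : Measure ℝ).prod volume :=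
    Measure.volume_eq_prod ℝ ℝ
  have hFrect2 : IntegrableOn (Ffun lam t H) ((Iio (0:ℝ)) ×ˢ (Ioo (0:ℝ) t))
      ((volume : Measure ℝ).prod volume) := by
    unfold IntegrableOn; rw [← Measure.prod_restrict]; exact hFrect
  have hFrect' : IntegrableOn (Ffun lam t H) ((Iio (0:ℝ)) ×ˢ (Ioo (0:ℝ) t)) volume := by
    unfold IntegrableOn; rw [hvol, ← Measure.prod_restrict]; exact hFrect
  -- change of variables
  have hchg : (∫ p in (Iio (0:ℝ)) ×ˢ (Ioo (0:ℝ) t), Ffun lam t H p)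
      = ∫ p in Tset t, |Lmap.det| • Ffun lam t H (Phi t p) := by
    rw [← Phi_image ht]
    exact integral_image_eq_integral_abs_det_fderiv_smul volume (Tset_meas t) hder hinj _
  have hGT : IntegrableOn (fun p => |Lmap.det| • Ffun lam t H (Phi t p)) (Tset t) volume :=
    (integrableOn_image_iff_integrableOn_abs_det_fderiv_smul volume (Tset_meas t) hder hinj
      _).mp (by rw [Phi_image ht]; exact hFrect')
  have hhalf : (fun p => |Lmap.det| • Ffun lam t H (Phi t p))
      = fun p => (1 / 2 : ℝ) * Gfun lam H p := by
    funext p; rw [hdet, Fcomp, smul_eq_mul]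
  have hGint : IntegrableOn (Gfun lam H) (Tset t) volume := by
    rw [hhalf] at hGT
    have h2 := hGT.const_mul (2:ℝ)
    have he : (fun p : ℝ × ℝ => (2:ℝ) * ((1 / 2 : ℝ) * Gfun lam H p)) = Gfun lam H := by
      funext p; ring
    rwa [he] at h2
  -- Fubini on the G side via the indicator function
  have hKint' : Integrable ((Tset t).indicator (Gfun lam H)) ((volume : Measure ℝ).prod volume) := by
    rw [← hvol]; exact hGint.integrable_indicator (Tset_meas t)
  have hslice : ∀ w : ℝ, (fun x => (Tset t).indicator (Gfun lam H) (w, x))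
      = (Ioo (|t - w|) (t + w)).indicator (fun x => Gfun lam H (w, x)) := by
    intro w; funext x
    by_cases h : |t - w| < x ∧ x < t + w
    · rw [Set.indicator_of_mem (show (w, x) ∈ Tset t from h),
        Set.indicator_of_mem (show x ∈ Ioo (|t - w|) (t + w) from h)]
    · rw [Set.indicator_of_notMem (show (w, x) ∉ Tset t from h),
        Set.indicator_of_notMem (show x ∉ Ioo (|t - w|) (t + w) from h)]
  have hiterG : (∫ p in Tset t, Gfun lam H p)
      = ∫ w : ℝ, ∫ x in Ioo (|t - w|) (t + w), Gfun lam H (w, x) := by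
    rw [← integral_indicator (Tset_meas t), hvol, integral_prod _ hKint']
    congr 1; funext w
    rw [hslice w, integral_indicator measurableSet_Ioo]
  have hgzero : ∀ w : ℝ, w ∉ Ioi (0:ℝ) →
      (∫ x in Ioo (|t - w|) (t + w), Gfun lam H (w, x)) = 0 := by
    intro w hw
    rw [mem_Ioi, not_lt] at hw
    have h1 : t - w ≤ |t - w| := le_abs_self _
    have hempty : Ioo (|t - w|) (t + w) = ∅ := Ioo_eq_empty (not_lt.mpr (by linarith))
    rw [hempty]; simp
  have houter : (∫ w : ℝ, ∫ x in Ioo (|t - w|) (t + w), Gfun lam H (w, x))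
      = ∫ w in Ioi (0:ℝ), ∫ x in Ioo (|t - w|) (t + w), Gfun lam H (w, x) :=
    (setIntegral_eq_integral_of_forall_compl_eq_zero hgzero).symm
  have hRHSfun : ∀ w ∈ Ioi (0:ℝ),
      (∫ x in Ioo (|t - w|) (t + w), Gfun lam H (w, x))
        = Real.exp (-lam * w) * ∫ x in |t - w|..(t + w), x ^ (2 * H - 2) := by
    intro w hw
    rw [mem_Ioi] at hw
    have hab : -(t + w) ≤ t - w := by linarith
    have hle : |t - w| ≤ t + w := abs_le.mpr ⟨hab, by linarith⟩
    rw [intervalIntegral.integral_of_le hle, integral_Ioc_eq_integral_Ioo, ← integral_const_mul]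
    rfl
  have hfunL : (fun u : ℝ => Real.exp (lam * u) *
        ∫ v in (0 : ℝ)..t, Real.exp (-lam * (t - v)) * (v - u) ^ (2 * H - 2))
      = fun u : ℝ => ∫ v in Ioo (0:ℝ) t, Ffun lam t H (u, v) := by
    funext u
    rw [intervalIntegral.integral_of_le ht.le, integral_Ioc_eq_integral_Ioo, ← integral_const_mul]
    rfl
  have c1 : MeasureTheory.IntegrableOn
      (fun u : ℝ =>
        Real.exp (lam * u) * ∫ v in (0 : ℝ)..t, Real.exp (-lam * (t - v)) * (v - u) ^ (2 * H - 2))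
      (Set.Iio (0 : ℝ)) := by
    rw [hfunL]; exact hFrect.integral_prod_left
  have hg : Integrable (fun w : ℝ => ∫ x in Ioo (|t - w|) (t + w), Gfun lam H (w, x)) volume := by
    have h := hKint'.integral_prod_left
    have heq : (fun w : ℝ => ∫ x : ℝ, (Tset t).indicator (Gfun lam H) (w, x))
        = fun w : ℝ => ∫ x in Ioo (|t - w|) (t + w), Gfun lam H (w, x) := by
      funext w; rw [hslice w, integral_indicator measurableSet_Ioo]
    rwa [heq] at h
  have c2 : MeasureTheory.IntegrableOn
      (fun w : ℝ => Real.exp (-lam * w) * ∫ x in |t - w|..(t + w), x ^ (2 * H - 2))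
      (Set.Ioi (0 : ℝ)) :=
    (hg.integrableOn).congr_fun hRHSfun measurableSet_Ioi
  refine ⟨c1, c2, ?_⟩
  calc (∫ u in Set.Iio (0 : ℝ),
        Real.exp (lam * u) * ∫ v in (0 : ℝ)..t, Real.exp (-lam * (t - v)) * (v - u) ^ (2 * H - 2))
      = ∫ u in Iio (0:ℝ), ∫ v in Ioo (0:ℝ) t, Ffun lam t H (u, v) := by rw [hfunL]
    _ = ∫ p in (Iio (0:ℝ)) ×ˢ (Ioo (0:ℝ) t), Ffun lam t H p := by
        rw [hvol]; exact (setIntegral_prod _ hFrect2).symm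
    _ = ∫ p in Tset t, |Lmap.det| • Ffun lam t H (Phi t p) := hchg
    _ = ∫ p in Tset t, (1 / 2 : ℝ) * Gfun lam H p := by rw [hhalf]
    _ = (1 / 2 : ℝ) * ∫ p in Tset t, Gfun lam H p := integral_const_mul _ _
    _ = (1 / 2) *
        ∫ w in Set.Ioi (0 : ℝ),
          Real.exp (-lam * w) * ∫ x in |t - w|..(t + w), x ^ (2 * H - 2) := by
        rw [hiterG, houter]
        congr 1
        exact setIntegral_congr_fun measurableSet_Ioi hRHSfun
end

section
/- Let λ > 0, σ > 0 and H ∈ (1/2, 1). Then, as t → 0⁺, −(σ²H(2H−1)/2) ∫_{0}^{∞} e^{−λw} ( (t+w)^{2H−2} − |t−w|^{2H−2} ) dw = σ²H·t^{2H−1} + o(t^{2H−1}); equivalently, lim_{t → 0⁺} t^{1−2H} ∫_{0}^{∞} e^{−λw} ( (t+w)^{2H−2} − |t−w|^{2H−2} ) dw = −2/(2H−1). -/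
/-!
Substituting `w = t y` turns the integral into `t ^ (2H-1)` times the Laplace transform, at
`s = λ t`, of the kernel `Δ(y) = (1 + y) ^ (2H-2) - |1 - y| ^ (2H-2)`. For `H ∈ (1/2, 1)` the kernel
is integrable on `(0, ∞)`: its singularity at `y = 1` has exponent `> -1`, and on `(1, ∞)` it is the
derivative of `((1 + y) ^ (2H-1) - (y - 1) ^ (2H-1)) / (2H-1)`, which tends to `0`. Hence by
dominated convergence the Laplace transform tends to `∫₀^∞ Δ` as `s → 0⁺`, and
`∫₀¹ Δ = (2 ^ (2H-1) - 2) / (2H-1)`, `∫₁^∞ Δ = -2 ^ (2H-1) / (2H-1)` add up to `-2 / (2H-1)`.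
-/

open MeasureTheory Real Set Filter Asymptotics Topology

noncomputable def powDiffKernel (β y : ℝ) : ℝ := (1 + y) ^ β - |1 - y| ^ β

lemma rpow_add_sub_abs_rpow_sub_eq_mul_powDiffKernel (β : ℝ) {t y : ℝ} (ht : 0 ≤ t)
    (hy : -1 ≤ y) : (t + t * y) ^ β - |t - t * y| ^ β = t ^ β * powDiffKernel β y := by
  rw [powDiffKernel, show t + t * y = t * (1 + y) by ring, show t - t * y = t * (1 - y) by ring,
    abs_mul, abs_of_nonneg ht, mul_rpow ht (by linarith), mul_rpow ht (abs_nonneg _), mul_sub]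

lemma integral_exp_mul_rpow_add_sub_abs_rpow_sub (lam β : ℝ) {t : ℝ} (ht : 0 < t) :
    ∫ w in Ioi (0 : ℝ), exp (-lam * w) * ((t + w) ^ β - |t - w| ^ β) =
      t ^ (β + 1) * ∫ y in Ioi (0 : ℝ), exp (-(lam * t) * y) * powDiffKernel β y := by
  have hsubst := integral_comp_mul_left_Ioi
    (fun w => exp (-lam * w) * ((t + w) ^ β - |t - w| ^ β)) 0 ht
  rw [mul_zero] at hsubst
  have hintegrand : EqOn (fun y => exp (-lam * (t * y)) * ((t + t * y) ^ β - |t - t * y| ^ β))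
      (fun y => t ^ β * (exp (-(lam * t) * y) * powDiffKernel β y)) (Ioi 0) := by
    intro y hy
    simp only
    rw [rpow_add_sub_abs_rpow_sub_eq_mul_powDiffKernel β ht.le (by linarith [mem_Ioi.1 hy])]
    ring_nf
  rw [setIntegral_congr_fun measurableSet_Ioi hintegrand, integral_const_mul, smul_eq_mul,
    eq_inv_mul_iff_mul_eq₀ ht.ne'] at hsubst
  rw [← hsubst, rpow_add_one ht.ne']
  ring

lemma powDiffKernel_integrableOn_Ioc_and_integral (β : ℝ) (hβ : -1 < β) :
    IntegrableOn (powDiffKernel β) (Ioc 0 1) ∧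
      ∫ y in Ioc (0 : ℝ) 1, powDiffKernel β y = (2 ^ (β + 1) - 2) / (β + 1) := by
  have hplus : IntervalIntegrable (fun y : ℝ => (1 + y) ^ β) volume 0 1 := by
    refine ContinuousOn.intervalIntegrable (ContinuousOn.rpow_const (by fun_prop) fun y hy => ?_)
    rw [uIcc_of_le zero_le_one] at hy
    exact Or.inl (by linarith [hy.1])
  have hminus : IntervalIntegrable (fun y : ℝ => (1 - y) ^ β) volume 0 1 := by
    simpa using
      ((intervalIntegral.intervalIntegrable_rpow' (a := 0) (b := 1) hβ).comp_sub_left 1).symm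
  have hkernel : EqOn (powDiffKernel β) (fun y => (1 + y) ^ β - (1 - y) ^ β) (Ioc 0 1) :=
    fun y hy => by rw [powDiffKernel, abs_of_nonneg (by linarith [hy.2])]
  have hne : β + 1 ≠ 0 := by linarith
  refine ⟨?_, ?_⟩
  · refine IntegrableOn.congr_fun ?_ hkernel.symm measurableSet_Ioc
    exact (intervalIntegrable_iff_integrableOn_Ioc_of_le zero_le_one).1 (hplus.sub hminus)
  · rw [setIntegral_congr_fun measurableSet_Ioc hkernel,
      ← intervalIntegral.integral_of_le zero_le_one, intervalIntegral.integral_sub hplus hminus,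
      intervalIntegral.integral_comp_add_left (fun x : ℝ => x ^ β),
      intervalIntegral.integral_comp_sub_left (fun x : ℝ => x ^ β)]
    norm_num [integral_rpow (Or.inl hβ), zero_rpow hne]
    field_simp
    ring

lemma tendsto_sub_one_rpow_sub_one_add_rpow_atTop {p : ℝ} (hp0 : 0 < p) (hp1 : p < 1) :
    Tendsto (fun y : ℝ => (y - 1) ^ p - (1 + y) ^ p) atTop (𝓝 0) := by
  have hlower : ∀ᶠ y : ℝ in atTop, -(2 * p * (y - 1) ^ (p - 1)) ≤ (y - 1) ^ p - (1 + y) ^ p := by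
    filter_upwards [eventually_gt_atTop 1] with y hy
    have hy1 : 0 < y - 1 := by linarith
    have hBernoulli : (1 + 2 / (y - 1)) ^ p ≤ 1 + p * (2 / (y - 1)) :=
      rpow_one_add_le_one_add_mul_self (by linarith [div_pos two_pos hy1]) hp0.le hp1.le
    have hfactor : (1 + y) ^ p = (y - 1) ^ p * (1 + 2 / (y - 1)) ^ p := by
      rw [← mul_rpow hy1.le (by positivity)]
      congr 1
      field_simp
      ring
    have hscaled := mul_le_mul_of_nonneg_left hBernoulli (rpow_nonneg hy1.le p)
    have hexpand : (y - 1) ^ p * (1 + p * (2 / (y - 1))) =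
        (y - 1) ^ p + 2 * p * (y - 1) ^ (p - 1) := by
      rw [rpow_sub_one hy1.ne']
      ring
    linarith
  have hupper : ∀ᶠ y : ℝ in atTop, (y - 1) ^ p - (1 + y) ^ p ≤ 0 := by
    filter_upwards [eventually_gt_atTop 1] with y hy
    linarith [rpow_le_rpow (by linarith : (0 : ℝ) ≤ y - 1) (by linarith : y - 1 ≤ 1 + y) hp0.le]
  have hbound : Tendsto (fun y : ℝ => -(2 * p * (y - 1) ^ (p - 1))) atTop (𝓝 0) := by
    have hdecay : Tendsto (fun y : ℝ => (y - 1) ^ (p - 1)) atTop (𝓝 0) := by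
      refine ((tendsto_rpow_neg_atTop (y := 1 - p) (by linarith)).comp
        (tendsto_atTop_add_const_right atTop (-1) tendsto_id)).congr fun y => ?_
      simp only [Function.comp, id, neg_sub]
      ring_nf
    simpa using (hdecay.const_mul (2 * p)).neg
  exact tendsto_of_tendsto_of_tendsto_of_le_of_le' hbound tendsto_const_nhds hlower hupper

lemma hasDerivAt_sub_one_rpow_sub_one_add_rpow {p x : ℝ} (hx : 1 < x) :
    HasDerivAt (fun y : ℝ => (y - 1) ^ p - (1 + y) ^ p)
      (p * ((x - 1) ^ (p - 1) - (1 + x) ^ (p - 1))) x := by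
  have hleft : HasDerivAt (fun y : ℝ => (y - 1) ^ p) (p * (x - 1) ^ (p - 1)) x := by
    simpa using ((hasDerivAt_id x).sub_const 1).rpow_const (p := p) (Or.inl (by simp; linarith))
  have hright : HasDerivAt (fun y : ℝ => (1 + y) ^ p) (p * (1 + x) ^ (p - 1)) x := by
    simpa using ((hasDerivAt_id x).const_add 1).rpow_const (p := p) (Or.inl (by simp; linarith))
  rw [mul_sub]
  exact hleft.sub hright

lemma powDiffKernel_integrableOn_Ioi_one_and_integral {β : ℝ} (hβ₁ : -1 < β) (hβ₀ : β < 0) :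
    IntegrableOn (powDiffKernel β) (Ioi 1) ∧
      ∫ y in Ioi (1 : ℝ), powDiffKernel β y = -(2 ^ (β + 1) / (β + 1)) := by
  have hp : 0 < β + 1 := by linarith
  set g : ℝ → ℝ := fun y => ((y - 1) ^ (β + 1) - (1 + y) ^ (β + 1)) / (β + 1)
  have hcont : Continuous g := by
    refine Continuous.div_const (Continuous.sub ?_ ?_) _ <;>
      exact Continuous.rpow_const (by fun_prop) fun _ => Or.inr hp.le
  have hderiv : ∀ x ∈ Ioi (1 : ℝ), HasDerivAt g (-powDiffKernel β x) x := by
    intro x hx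
    have hx1 : 1 < x := hx
    refine ((hasDerivAt_sub_one_rpow_sub_one_add_rpow hx1).div_const (β + 1)).congr_deriv ?_
    rw [powDiffKernel, abs_of_neg (by linarith : 1 - x < 0), add_sub_cancel_right,
      mul_div_cancel_left₀ _ hp.ne', neg_sub, neg_sub]
  have hnonneg : ∀ x ∈ Ioi (1 : ℝ), 0 ≤ -powDiffKernel β x := by
    intro x hx
    have hx1 : 1 < x := hx
    rw [powDiffKernel, abs_of_neg (by linarith : 1 - x < 0), neg_sub, sub_nonneg, neg_sub]
    exact rpow_le_rpow_of_nonpos (by linarith) (by linarith) hβ₀.le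
  have hlim : Tendsto g atTop (𝓝 0) := by
    simpa using (tendsto_sub_one_rpow_sub_one_add_rpow_atTop hp (by linarith)).div_const (β + 1)
  refine ⟨by simpa using (integrableOn_Ioi_deriv_of_nonneg hcont.continuousWithinAt
      hderiv hnonneg hlim).neg, ?_⟩
  have hval := integral_Ioi_of_hasDerivAt_of_nonneg hcont.continuousWithinAt hderiv hnonneg hlim
  rw [integral_neg, neg_eq_iff_eq_neg] at hval
  rw [hval]
  norm_num [g, zero_rpow hp.ne']
  ring

lemma powDiffKernel_integrableOn_Ioi_zero_and_integral {β : ℝ} (hβ₁ : -1 < β) (hβ₀ : β < 0) :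
    IntegrableOn (powDiffKernel β) (Ioi 0) ∧
      ∫ y in Ioi (0 : ℝ), powDiffKernel β y = -2 / (β + 1) := by
  obtain ⟨hint₁, hval₁⟩ := powDiffKernel_integrableOn_Ioc_and_integral β hβ₁
  obtain ⟨hint₂, hval₂⟩ := powDiffKernel_integrableOn_Ioi_one_and_integral hβ₁ hβ₀
  rw [← Ioc_union_Ioi_eq_Ioi zero_le_one]
  refine ⟨hint₁.union hint₂, ?_⟩
  rw [setIntegral_union (Ioc_disjoint_Ioi le_rfl) measurableSet_Ioi hint₁ hint₂, hval₁, hval₂]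
  ring

lemma tendsto_setIntegral_exp_neg_mul_nhdsGE_zero {f : ℝ → ℝ} (hf : IntegrableOn f (Ioi 0)) :
    Tendsto (fun s => ∫ y in Ioi (0 : ℝ), exp (-s * y) * f y) (𝓝[≥] 0)
      (𝓝 (∫ y in Ioi (0 : ℝ), f y)) := by
  refine tendsto_integral_filter_of_dominated_convergence (fun y => ‖f y‖) ?_ ?_ hf.norm ?_
  · exact Eventually.of_forall fun s =>
      (Continuous.aestronglyMeasurable (by fun_prop)).mul hf.aestronglyMeasurable
  · filter_upwards [self_mem_nhdsWithin] with s hs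
    filter_upwards [ae_restrict_mem measurableSet_Ioi] with y hy
    rw [norm_mul, norm_of_nonneg (exp_pos _).le]
    refine mul_le_of_le_one_left (norm_nonneg _) (exp_le_one_iff.2 ?_)
    nlinarith [mul_nonneg (mem_Ici.1 hs) (le_of_lt (mem_Ioi.1 hy))]
  · refine Eventually.of_forall fun y => ?_
    simpa using ((continuous_exp.comp (continuous_neg.mul continuous_const)).tendsto' 0 1
      (by simp)).mul_const (f y) |>.mono_left nhdsWithin_le_nhds

lemma isLittleO_rpow_of_tendsto_rpow_mul {f : ℝ → ℝ} {a b L : ℝ} (hab : a + b = 0) (c : ℝ)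
    (hf : Tendsto (fun t => t ^ b * f t) (𝓝[>] 0) (𝓝 L)) :
    (fun t => c * f t - c * L * t ^ a) =o[𝓝[>] 0] fun t => t ^ a := by
  have hvanish : Tendsto (fun t => c * (t ^ b * f t) - c * L) (𝓝[>] 0) (𝓝 0) := by
    simpa using (hf.const_mul c).sub_const (c * L)
  refine ((isBigO_refl (fun t : ℝ => t ^ a) _).mul_isLittleO
    ((isLittleO_one_iff ℝ).2 hvanish)).congr' ?_ (by simp)
  filter_upwards [self_mem_nhdsWithin] with t (ht : 0 < t)
  have hcancel : t ^ a * t ^ b = 1 := by rw [← rpow_add ht, hab, rpow_zero]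
  linear_combination (c * f t) * hcancel

theorem fou_variogram_smallTime_asymptotics_general
    (lam sigma H : ℝ) (hlam : 0 < lam)
    (hH : H ∈ Set.Ioo (1 / 2 : ℝ) 1) :
    (fun t : ℝ =>
        -(sigma ^ 2 * H * (2 * H - 1) / 2) *
            (∫ w in Set.Ioi (0 : ℝ),
              Real.exp (-lam * w) * ((t + w) ^ (2 * H - 2) - |t - w| ^ (2 * H - 2)))
          - sigma ^ 2 * H * t ^ (2 * H - 1))
      =o[nhdsWithin 0 (Set.Ioi 0)] (fun t : ℝ => t ^ (2 * H - 1)) ∧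
    Filter.Tendsto
      (fun t : ℝ =>
        t ^ (1 - 2 * H) *
          ∫ w in Set.Ioi (0 : ℝ),
            Real.exp (-lam * w) * ((t + w) ^ (2 * H - 2) - |t - w| ^ (2 * H - 2)))
      (nhdsWithin 0 (Set.Ioi 0)) (nhds (-2 / (2 * H - 1))) := by
  obtain ⟨hH₁, hH₂⟩ := hH
  obtain ⟨hint, hval⟩ := powDiffKernel_integrableOn_Ioi_zero_and_integral
    (by linarith : -1 < 2 * H - 2) (by linarith : 2 * H - 2 < 0)
  have hscale : Tendsto (fun t => lam * t) (𝓝[>] 0) (𝓝[≥] 0) :=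
    tendsto_nhdsWithin_of_tendsto_nhds_of_eventually_within _
      (((continuous_const_mul lam).tendsto' 0 0 (mul_zero lam)).mono_left nhdsWithin_le_nhds)
      (eventually_nhdsWithin_of_forall fun t ht => (mul_pos hlam ht).le)
  have hlaplace := (tendsto_setIntegral_exp_neg_mul_nhdsGE_zero hint).comp hscale
  rw [hval, show 2 * H - 2 + 1 = 2 * H - 1 by ring] at hlaplace
  have hnormalized : Tendsto (fun t : ℝ => t ^ (1 - 2 * H) * ∫ w in Ioi (0 : ℝ),
      exp (-lam * w) * ((t + w) ^ (2 * H - 2) - |t - w| ^ (2 * H - 2)))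
      (𝓝[>] 0) (𝓝 (-2 / (2 * H - 1))) :=
    hlaplace.congr' (eventually_nhdsWithin_of_forall fun t (ht : 0 < t) => by
      dsimp only [Function.comp_apply]
      rw [integral_exp_mul_rpow_add_sub_abs_rpow_sub lam _ ht, ← mul_assoc,
        ← rpow_add ht, show 1 - 2 * H + (2 * H - 2 + 1) = 0 by ring, rpow_zero, one_mul])
  refine ⟨?_, hnormalized⟩
  have hconst : -(sigma ^ 2 * H * (2 * H - 1) / 2) * (-2 / (2 * H - 1)) = sigma ^ 2 * H := by
    rw [show -(sigma ^ 2 * H * (2 * H - 1) / 2) * (-2 / (2 * H - 1)) =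
      sigma ^ 2 * H * ((2 * H - 1) / (2 * H - 1)) by ring, div_self (by linarith), mul_one]
  have hlittleO := isLittleO_rpow_of_tendsto_rpow_mul (a := 2 * H - 1) (by ring)
    (-(sigma ^ 2 * H * (2 * H - 1) / 2)) hnormalized
  rwa [hconst] at hlittleO

/-- For `λ > 0`, `σ > 0` and `H ∈ (1/2, 1)`, as `t → 0⁺`,
`-(σ² H (2H-1)/2) ∫_0^∞ e^{-λw} ((t+w)^{2H-2} - |t-w|^{2H-2}) dw = σ² H t^{2H-1} + o(t^{2H-1})`;
equivalently `lim_{t→0⁺} t^{1-2H} ∫_0^∞ e^{-λw} ((t+w)^{2H-2} - |t-w|^{2H-2}) dw = -2/(2H-1)`. -/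
theorem fou_variogram_smallTime_asymptotics
    (lam sigma H : ℝ) (hlam : 0 < lam) (hsigma : 0 < sigma)
    (hH : H ∈ Set.Ioo (1 / 2 : ℝ) 1) :
    (fun t : ℝ =>
        -(sigma ^ 2 * H * (2 * H - 1) / 2) *
            (∫ w in Set.Ioi (0 : ℝ),
              Real.exp (-lam * w) * ((t + w) ^ (2 * H - 2) - |t - w| ^ (2 * H - 2)))
          - sigma ^ 2 * H * t ^ (2 * H - 1))
      =o[nhdsWithin 0 (Set.Ioi 0)] (fun t : ℝ => t ^ (2 * H - 1)) ∧
    Filter.Tendsto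
      (fun t : ℝ =>
        t ^ (1 - 2 * H) *
          ∫ w in Set.Ioi (0 : ℝ),
            Real.exp (-lam * w) * ((t + w) ^ (2 * H - 2) - |t - w| ^ (2 * H - 2)))
      (nhdsWithin 0 (Set.Ioi 0)) (nhds (-2 / (2 * H - 1))) :=
  fou_variogram_smallTime_asymptotics_general lam sigma H hlam hH
end

section
/- Let H ∈ (0, 1), σ > 0, K ≥ 1, and let a = (a_0, …, a_K) be real numbers, not all zero, with Σ_{k=0}^{K} a_k = 0. Let a² = (a²_0, …, a²_{2K}) be the dilated sequence defined by a²_{2k′} = a_{k′} and a²_k = 0 for odd k. Let v : [0, ∞) → ℝ be any function satisfying v(t) = (σ²/2)·t^{2H} + o(t^{2H}) as t → 0⁺, and set Q_a(Δ) = Σ_{k=0}^{K} Σ_{ℓ=0}^{K} a_k a_ℓ v(|k−ℓ|·Δ) and Q_{a²}(Δ) = Σ_{k=0}^{2K} Σ_{ℓ=0}^{2K} a²_k a²_ℓ v(|k−ℓ|·Δ). Then Q_{a²}(Δ) = Q_a(2Δ) for every Δ > 0, the quantities Q_a(Δ) and Q_{a²}(Δ) are nonzero for all sufficiently small Δ >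 0, and lim_{Δ → 0⁺} (1/2) log₂ ( Q_{a²}(Δ) / Q_a(Δ) ) = H. -/
open Real Filter Asymptotics Finset
open MeasureTheory Set Topology

/-!
Write `S = ∑ a_k a_l |k - l|^{2H}`. Expanding `v` gives `Q_a(Δ) = (σ²/2) S Δ^{2H} + o(Δ^{2H})`,
and `Q_{a²}(Δ) = Q_a(2Δ)`, so `Q_{a²}(Δ) / Q_a(Δ) → 2^{2H}` as soon as `S ≠ 0`.
In fact `S < 0`, because `|y|^{2H}` is conditionally negative definite: `|y|^{2H}` is a positive
multiple of `∫₀^∞ (1 - e^{-y² s}) s^{-1-H} ds`, and since `∑ a_k = 0` this turns `S` into a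
negative multiple of `∫₀^∞ G(s) s^{-1-H} ds` with `G(s) = ∑ a_k a_l e^{-(k-l)² s}`. The Gaussian
kernel is positive definite (expand `e^{2kls}` in its power series), so `G ≥ 0`, and
`G(s) → ∑ a_k² > 0` as `s → ∞`.
-/

section GaussianKernel

variable {ι : Type*} (s : Finset ι) (c x : ι → ℝ)

theorem sum_sum_mul_mul_exp_mul_mul_nonneg {t : ℝ} (ht : 0 ≤ t) :
    0 ≤ ∑ i ∈ s, ∑ j ∈ s, c i * c j * exp (t * x i * x j) := by
  have hsum : HasSum (fun n : ℕ => ∑ i ∈ s, ∑ j ∈ s,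
      c i * c j * ((t * x i * x j) ^ n / n.factorial))
      (∑ i ∈ s, ∑ j ∈ s, c i * c j * exp (t * x i * x j)) := by
    refine hasSum_sum fun i _ => hasSum_sum fun j _ => ?_
    have := NormedSpace.expSeries_div_hasSum_exp (𝔸 := ℝ) (t * x i * x j)
    rw [← Real.exp_eq_exp_ℝ] at this
    exact this.mul_left (c i * c j)
  refine hsum.nonneg fun n => ?_
  have hsq : ∑ i ∈ s, ∑ j ∈ s, c i * c j * ((t * x i * x j) ^ n / n.factorial)
      = (∑ i ∈ s, c i * x i ^ n) ^ 2 * (t ^ n / n.factorial) := by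
    rw [sq, sum_mul_sum, sum_mul]
    refine sum_congr rfl fun i _ => ?_
    rw [sum_mul]
    refine sum_congr rfl fun j _ => ?_
    rw [mul_pow, mul_pow]
    ring
  rw [hsq]
  positivity

noncomputable def gaussianKernelForm (t : ℝ) : ℝ :=
  ∑ i ∈ s, ∑ j ∈ s, c i * c j * exp (-((x i - x j) ^ 2 * t))

theorem gaussianKernelForm_nonneg {t : ℝ} (ht : 0 ≤ t) : 0 ≤ gaussianKernelForm s c x t := by
  unfold gaussianKernelForm
  convert sum_sum_mul_mul_exp_mul_mul_nonneg s (fun i => c i * exp (-(x i ^ 2 * t))) x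
    (by positivity : 0 ≤ 2 * t) using 3 with i _ j _
  rw [show -((x i - x j) ^ 2 * t) = -(x i ^ 2 * t) + -(x j ^ 2 * t) + 2 * t * x i * x j by ring,
    exp_add, exp_add]
  ring

theorem tendsto_gaussianKernelForm_atTop (hx : Set.InjOn x s) :
    Tendsto (gaussianKernelForm s c x) atTop (𝓝 (∑ i ∈ s, c i ^ 2)) := by
  classical
  have hdiag : ∑ i ∈ s, c i ^ 2 = ∑ i ∈ s, ∑ j ∈ s, if i = j then c i * c j else 0 := by
    refine sum_congr rfl fun i hi => ?_
    rw [sum_ite_eq s i, if_pos hi, sq]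
  rw [hdiag]
  refine tendsto_finsetSum _ fun i hi => tendsto_finsetSum _ fun j hj => ?_
  split_ifs with hij
  · subst hij
    simp
  · have hpos : 0 < (x i - x j) ^ 2 := by
      have : x i ≠ x j := fun h => hij (hx hi hj h)
      positivity
    rw [← mul_zero (c i * c j)]
    refine tendsto_const_nhds.mul (tendsto_exp_atBot.comp ?_)
    exact tendsto_neg_atTop_atBot.comp (tendsto_id.const_mul_atTop hpos)

theorem sum_sum_mul_mul_one_sub_exp_mul (hc0 : ∑ i ∈ s, c i = 0) (t q : ℝ) :
    ∑ i ∈ s, ∑ j ∈ s, c i * c j * ((1 - exp (-((x i - x j) ^ 2 * t))) * q)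
      = -(gaussianKernelForm s c x t * q) := by
  have hcc : ∑ i ∈ s, ∑ j ∈ s, c i * c j = 0 := by rw [← sum_mul_sum, hc0, zero_mul]
  have hsplit : ∀ i j, c i * c j * ((1 - exp (-((x i - x j) ^ 2 * t))) * q)
      = c i * c j * q - c i * c j * exp (-((x i - x j) ^ 2 * t)) * q := fun i j => by ring
  simp only [hsplit, sum_sub_distrib, ← sum_mul, hcc, gaussianKernelForm]
  ring

end GaussianKernel

section FractionalPowerIntegral

variable {H : ℝ}

theorem integrableOn_one_sub_exp_neg_mul_mul_rpow (h0 : 0 < H) (h1 : H < 1) {c : ℝ}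
    (hc : 0 ≤ c) :
    IntegrableOn (fun s => (1 - exp (-(c * s))) * s ^ (-1 - H)) (Ioi 0) := by
  have hmeas : ∀ t ⊆ Ioi (0 : ℝ), MeasurableSet t →
      AEStronglyMeasurable (fun s => (1 - exp (-(c * s))) * s ^ (-1 - H)) (volume.restrict t) :=
    fun t ht htm => ContinuousOn.aestronglyMeasurable (fun s hs =>
      ((continuous_const.sub (by fun_prop)).continuousAt.mul
        (continuousAt_rpow_const s _ (Or.inl (ht hs).ne'))).continuousWithinAt) htm
  have hbound : ∀ s : ℝ, 0 < s →
      0 ≤ 1 - exp (-(c * s)) ∧ 1 - exp (-(c * s)) ≤ c * s ∧ 1 - exp (-(c * s)) ≤ 1 := by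
    intro s hs
    refine ⟨sub_nonneg.2 (exp_le_one_iff.2 ?_), ?_, by linarith [exp_pos (-(c * s))]⟩
    · have := mul_nonneg hc hs.le
      linarith
    · linarith [add_one_le_exp (-(c * s))]
  rw [← Ioo_union_Ici_eq_Ioi one_pos]
  refine IntegrableOn.union ?_ ?_
  · refine Integrable.mono' (((intervalIntegral.integrableOn_Ioo_rpow_iff one_pos).2
      (by linarith : -1 < -H)).const_mul c) (hmeas _ Ioo_subset_Ioi_self measurableSet_Ioo) ?_
    filter_upwards [ae_restrict_mem measurableSet_Ioo] with s hs
    obtain ⟨hnn, hle, -⟩ := hbound s hs.1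
    have hrpow : s * s ^ (-1 - H) = s ^ (-H) := by
      rw [← rpow_one_add' hs.1.le (by linarith)]
      ring_nf
    have hpow : 0 ≤ s ^ (-1 - H) := rpow_nonneg hs.1.le _
    rw [norm_of_nonneg (mul_nonneg hnn hpow), ← hrpow, ← mul_assoc]
    exact mul_le_mul_of_nonneg_right hle hpow
  · rw [integrableOn_Ici_iff_integrableOn_Ioi]
    refine Integrable.mono' (integrableOn_Ioi_rpow_of_lt (by linarith : -1 - H < -1) one_pos)
      (hmeas _ (Ioi_subset_Ioi zero_le_one) measurableSet_Ioi) ?_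
    filter_upwards [ae_restrict_mem measurableSet_Ioi] with s (hs : 1 < s)
    obtain ⟨hnn, -, hle⟩ := hbound s (by linarith)
    have hpow : 0 ≤ s ^ (-1 - H) := rpow_nonneg (by linarith) _
    rw [norm_of_nonneg (mul_nonneg hnn hpow)]
    exact mul_le_of_le_one_left hpow hle

theorem integral_one_sub_exp_neg_rpow_pos (h0 : 0 < H) (h1 : H < 1) :
    0 < ∫ s in Ioi 0, (1 - exp (-s)) * s ^ (-1 - H) := by
  have hint := integrableOn_one_sub_exp_neg_mul_mul_rpow h0 h1 zero_le_one
  simp only [one_mul] at hint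
  have hpos : ∀ s ∈ Ioi (0 : ℝ), 0 < (1 - exp (-s)) * s ^ (-1 - H) := fun s (hs : 0 < s) =>
    mul_pos (sub_pos.2 (exp_lt_one_iff.2 (neg_lt_zero.2 hs))) (rpow_pos_of_pos hs _)
  rw [setIntegral_pos_iff_support_of_nonneg_ae
    ((ae_restrict_iff' measurableSet_Ioi).2 (.of_forall fun s hs => (hpos s hs).le)) hint,
    inter_eq_self_of_subset_right fun s hs => Function.mem_support.2 (hpos s hs).ne', volume_Ioi]
  exact ENNReal.zero_lt_top

theorem integral_one_sub_exp_neg_mul_mul_rpow (hH : H ≠ 0) {c : ℝ} (hc : 0 ≤ c) :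
    ∫ s in Ioi 0, (1 - exp (-(c * s))) * s ^ (-1 - H)
      = c ^ H * ∫ s in Ioi 0, (1 - exp (-s)) * s ^ (-1 - H) := by
  rcases hc.eq_or_lt with rfl | hc
  · simp [zero_rpow hH]
  have hscale := integral_comp_mul_left_Ioi (fun u => (1 - exp (-u)) * u ^ (-1 - H)) 0 hc
  rw [mul_zero, smul_eq_mul] at hscale
  have hfactor : ∀ s ∈ Ioi (0 : ℝ), (1 - exp (-(c * s))) * (c * s) ^ (-1 - H)
      = c ^ (-1 - H) * ((1 - exp (-(c * s))) * s ^ (-1 - H)) := fun s hs => by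
    rw [mul_rpow hc.le (le_of_lt hs)]
    ring
  rw [setIntegral_congr_fun measurableSet_Ioi hfactor, integral_const_mul] at hscale
  have hcpow : c ^ (-1 - H) ≠ 0 := (rpow_pos_of_pos hc _).ne'
  rw [← mul_right_inj' hcpow, hscale, ← mul_assoc, ← rpow_neg_one c, ← rpow_add hc]
  congr 2
  ring

theorem integral_one_sub_exp_neg_sq_mul_mul_rpow (hH : H ≠ 0) (y : ℝ) :
    ∫ s in Ioi 0, (1 - exp (-(y ^ 2 * s))) * s ^ (-1 - H)
      = |y| ^ (2 * H) * ∫ s in Ioi 0, (1 - exp (-s)) * s ^ (-1 - H) := by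
  rw [integral_one_sub_exp_neg_mul_mul_rpow hH (sq_nonneg y), ← sq_abs, ← rpow_natCast,
    ← rpow_mul (abs_nonneg y)]
  norm_num

end FractionalPowerIntegral

section ConditionallyNegativeDefinite

variable {ι : Type*} {s : Finset ι} {c x : ι → ℝ} {H : ℝ}

theorem integrableOn_gaussianKernelForm_mul_rpow (hc0 : ∑ i ∈ s, c i = 0) (h0 : 0 < H)
    (h1 : H < 1) :
    IntegrableOn (fun t => gaussianKernelForm s c x t * t ^ (-1 - H)) (Ioi 0) := by
  have hsum := integrable_finsetSum s fun i _ => integrable_finsetSum s fun j _ =>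
    (integrableOn_one_sub_exp_neg_mul_mul_rpow h0 h1 (sq_nonneg (x i - x j))).const_mul (c i * c j)
  have hneg := hsum.neg
  simp only [sum_sum_mul_mul_one_sub_exp_mul s c x hc0, Pi.neg_def, neg_neg] at hneg
  exact hneg

theorem sum_sum_mul_mul_abs_sub_rpow_mul_integral (hc0 : ∑ i ∈ s, c i = 0) (h0 : 0 < H)
    (h1 : H < 1) :
    (∑ i ∈ s, ∑ j ∈ s, c i * c j * |x i - x j| ^ (2 * H))
        * ∫ t in Ioi 0, (1 - exp (-t)) * t ^ (-1 - H)
      = -∫ t in Ioi 0, gaussianKernelForm s c x t * t ^ (-1 - H) := by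
  have hint : ∀ i j, IntegrableOn (fun t =>
      c i * c j * ((1 - exp (-((x i - x j) ^ 2 * t))) * t ^ (-1 - H))) (Ioi 0) := fun i j =>
    (integrableOn_one_sub_exp_neg_mul_mul_rpow h0 h1 (sq_nonneg _)).const_mul _
  simp_rw [← integral_neg, ← sum_sum_mul_mul_one_sub_exp_mul s c x hc0]
  rw [integral_finsetSum _ fun i _ => integrable_finsetSum _ fun j _ => hint i j, sum_mul]
  refine sum_congr rfl fun i _ => ?_
  rw [integral_finsetSum _ fun j _ => hint i j, sum_mul]
  refine sum_congr rfl fun j _ => ?_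
  rw [integral_const_mul, integral_one_sub_exp_neg_sq_mul_mul_rpow h0.ne', mul_assoc]

theorem integral_gaussianKernelForm_mul_rpow_pos (hx : Set.InjOn x s) (hc0 : ∑ i ∈ s, c i = 0)
    (hc : ∃ i ∈ s, c i ≠ 0) (h0 : 0 < H) (h1 : H < 1) :
    0 < ∫ t in Ioi 0, gaussianKernelForm s c x t * t ^ (-1 - H) := by
  obtain ⟨t₀, ht₀⟩ : ∃ t₀, ∀ t ≥ t₀, 0 < gaussianKernelForm s c x t := by
    obtain ⟨i, hi, hci⟩ := hc
    exact eventually_atTop.1 ((tendsto_gaussianKernelForm_atTop s c x hx).eventually_const_lt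
      (sum_pos' (fun i _ => sq_nonneg _) ⟨i, hi, by positivity⟩))
  rw [setIntegral_pos_iff_support_of_nonneg_ae ((ae_restrict_iff' measurableSet_Ioi).2
    (.of_forall fun t (ht : 0 < t) => mul_nonneg (gaussianKernelForm_nonneg s c x ht.le)
      (rpow_nonneg ht.le _))) (integrableOn_gaussianKernelForm_mul_rpow hc0 h0 h1)]
  refine lt_of_lt_of_le (by simp) (measure_mono (s := Ioi (max t₀ 0)) fun t ht => ?_)
  have ht : max t₀ 0 < t := ht
  have ht0 : 0 < t := (le_max_right _ _).trans_lt ht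
  exact ⟨Function.mem_support.2 (mul_pos (ht₀ t ((le_max_left _ _).trans ht.le))
    (rpow_pos_of_pos ht0 _)).ne', ht0⟩

theorem sum_sum_mul_mul_abs_sub_rpow_neg (hx : Set.InjOn x s) (hc0 : ∑ i ∈ s, c i = 0)
    (hc : ∃ i ∈ s, c i ≠ 0) (h0 : 0 < H) (h1 : H < 1) :
    ∑ i ∈ s, ∑ j ∈ s, c i * c j * |x i - x j| ^ (2 * H) < 0 := by
  refine neg_of_mul_neg_left ?_ (integral_one_sub_exp_neg_rpow_pos h0 h1).le
  rw [sum_sum_mul_mul_abs_sub_rpow_mul_integral hc0 h0 h1]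
  exact neg_neg_of_pos (integral_gaussianKernelForm_mul_rpow_pos hx hc0 hc h0 h1)

end ConditionallyNegativeDefinite

def variogramQuadForm (n : ℕ) (a : ℕ → ℝ) (v : ℝ → ℝ) (Δ : ℝ) : ℝ :=
  ∑ k ∈ range n, ∑ l ∈ range n, a k * a l * v (|(k : ℝ) - l| * Δ)

theorem sum_range_two_mul_add_one_of_odd_eq_zero {M : Type*} [AddCommMonoid M] (K : ℕ)
    {g : ℕ → M} (hg : ∀ k, k % 2 = 1 → g k = 0) :
    ∑ k ∈ range (2 * K + 1), g k = ∑ j ∈ range (K + 1), g (2 * j) := by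
  induction K with
  | zero => simp
  | succ K ih =>
    rw [show 2 * (K + 1) + 1 = 2 * K + 1 + 1 + 1 by ring, sum_range_succ, sum_range_succ, ih,
      hg _ (by omega), add_zero, sum_range_succ _ (K + 1), mul_add_one]

theorem variogramQuadForm_dilate {K : ℕ} {a a2 : ℕ → ℝ}
    (ha2 : ∀ k, a2 k = if k % 2 = 0 then a (k / 2) else 0) (v : ℝ → ℝ) (Δ : ℝ) :
    variogramQuadForm (2 * K + 1) a2 v Δ = variogramQuadForm (K + 1) a v (2 * Δ) := by
  have hodd : ∀ k, k % 2 = 1 → a2 k = 0 := fun k hk => by rw [ha2, if_neg (by omega)]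
  have heven : ∀ j, a2 (2 * j) = a j := fun j => by rw [ha2, if_pos (by omega)]; congr; omega
  unfold variogramQuadForm
  rw [sum_range_two_mul_add_one_of_odd_eq_zero K fun k hk => by simp [hodd k hk]]
  refine sum_congr rfl fun k _ => ?_
  rw [sum_range_two_mul_add_one_of_odd_eq_zero K fun l hl => by simp [hodd l hl]]
  refine sum_congr rfl fun l _ => ?_
  rw [heven, heven]
  push_cast
  rw [← mul_sub, abs_mul, abs_two]
  congr 2
  ring

theorem Asymptotics.IsLittleO.comp_const_mul_nhdsGT {f : ℝ → ℝ} {p c : ℝ}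
    (hf : f =o[𝓝[≥] 0] (· ^ p)) (hc : 0 ≤ c) :
    (fun Δ => f (c * Δ)) =o[𝓝[>] 0] (· ^ p) := by
  have hcont : Tendsto (c * ·) (𝓝[>] 0) (𝓝 0) := by
    simpa using ((continuous_const_mul c).tendsto 0).mono_left nhdsWithin_le_nhds
  have hmap : Tendsto (c * ·) (𝓝[>] 0) (𝓝[≥] 0) := tendsto_nhdsWithin_iff.2
    ⟨hcont, eventually_nhdsWithin_of_forall fun Δ hΔ => mul_nonneg hc (le_of_lt hΔ)⟩
  have hscale : (fun Δ : ℝ => (c * Δ) ^ p) =ᶠ[𝓝[>] 0] fun Δ => c ^ p * Δ ^ p :=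
    eventually_nhdsWithin_of_forall fun Δ hΔ => mul_rpow hc (le_of_lt hΔ)
  exact (hf.comp_tendsto hmap).trans_isBigO (hscale.trans_isBigO (isBigO_const_mul_self _ _ _))

theorem tendsto_variogramQuadForm_div_rpow {v : ℝ → ℝ} {b p : ℝ}
    (hv : (fun t => v t - b * t ^ p) =o[𝓝[≥] 0] (· ^ p)) (n : ℕ) (a : ℕ → ℝ) :
    Tendsto (fun Δ => variogramQuadForm n a v Δ / Δ ^ p) (𝓝[>] 0)
      (𝓝 (b * ∑ k ∈ range n, ∑ l ∈ range n, a k * a l * |(k : ℝ) - l| ^ p)) := by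
  set r := fun t => v t - b * t ^ p
  have hsplit : ∀ Δ > 0, variogramQuadForm n a v Δ / Δ ^ p
      = b * (∑ k ∈ range n, ∑ l ∈ range n, a k * a l * |(k : ℝ) - l| ^ p)
        + variogramQuadForm n a r Δ / Δ ^ p := fun Δ hΔ => by
    have hterm : ∀ k l : ℕ, a k * a l * v (|(k : ℝ) - l| * Δ)
        = b * (a k * a l * |(k : ℝ) - l| ^ p) * Δ ^ p + a k * a l * r (|(k : ℝ) - l| * Δ) :=
      fun k l => by
        simp only [r, mul_rpow (abs_nonneg _) hΔ.le]
        ring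
    have hΔp : Δ ^ p ≠ 0 := (rpow_pos_of_pos hΔ p).ne'
    simp only [variogramQuadForm, hterm, sum_add_distrib, ← sum_mul, ← mul_sum]
    rw [add_div, mul_div_cancel_right₀ _ hΔp]
  have hr : variogramQuadForm n a r =o[𝓝[>] 0] (· ^ p) :=
    .fun_sum fun k _ => .fun_sum fun l _ =>
      (hv.comp_const_mul_nhdsGT (abs_nonneg _)).const_mul_left _
  have hlim := (tendsto_const_nhds (x := b * ∑ k ∈ range n, ∑ l ∈ range n,
    a k * a l * |(k : ℝ) - l| ^ p)).add hr.tendsto_div_nhds_zero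
  rw [add_zero] at hlim
  exact hlim.congr' (eventually_nhdsWithin_of_forall fun Δ hΔ => (hsplit Δ hΔ).symm)

theorem tendsto_comp_mul_div_of_tendsto_div_rpow {f : ℝ → ℝ} {p C c : ℝ} (hc : 0 < c) (hC : C ≠ 0)
    (hf : Tendsto (fun Δ => f Δ / Δ ^ p) (𝓝[>] 0) (𝓝 C)) :
    Tendsto (fun Δ => f (c * Δ) / f Δ) (𝓝[>] 0) (𝓝 (c ^ p)) := by
  have hmul : Tendsto (c * ·) (𝓝[>] 0) (𝓝[>] 0) :=
    tendsto_iff_comap.2 (comap_mulLeft_nhdsGT_zero hc).ge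
  have hlim := ((hf.comp hmul).div hf hC).const_mul (c ^ p)
  rw [div_self hC, mul_one] at hlim
  refine hlim.congr' (eventually_nhdsWithin_of_forall fun Δ (hΔ : 0 < Δ) => ?_)
  change c ^ p * (f (c * Δ) / (c * Δ) ^ p / (f Δ / Δ ^ p)) = f (c * Δ) / f Δ
  rw [mul_rpow hc.le hΔ.le]
  field_simp

theorem hurst_estimator_population_identity_general
    (H sigma : ℝ) (hH : H ∈ Set.Ioo (0 : ℝ) 1) (hsigma : 0 < sigma)
    (K : ℕ) (a : ℕ → ℝ)
    (hzero : ∑ k ∈ Finset.range (K + 1), a k = 0)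
    (hne : ∃ k ∈ Finset.range (K + 1), a k ≠ 0)
    (a2 : ℕ → ℝ) (ha2 : ∀ k : ℕ, a2 k = if k % 2 = 0 then a (k / 2) else 0)
    (v : ℝ → ℝ)
    (hv : (fun t : ℝ => v t - sigma ^ 2 / 2 * t ^ (2 * H))
      =o[nhdsWithin 0 (Set.Ici 0)] (fun t : ℝ => t ^ (2 * H)))
    (Qa Qa2 : ℝ → ℝ)
    (hQa : ∀ Δ : ℝ, Qa Δ = ∑ k ∈ Finset.range (K + 1), ∑ l ∈ Finset.range (K + 1),
      a k * a l * v (|(k : ℝ) - (l : ℝ)| * Δ))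
    (hQa2 : ∀ Δ : ℝ, Qa2 Δ = ∑ k ∈ Finset.range (2 * K + 1), ∑ l ∈ Finset.range (2 * K + 1),
      a2 k * a2 l * v (|(k : ℝ) - (l : ℝ)| * Δ)) :
    (∀ Δ : ℝ, 0 < Δ → Qa2 Δ = Qa (2 * Δ)) ∧
    (∀ᶠ Δ in nhdsWithin (0 : ℝ) (Set.Ioi 0), Qa Δ ≠ 0 ∧ Qa2 Δ ≠ 0) ∧
    Filter.Tendsto (fun Δ : ℝ => (1 / 2) * Real.logb 2 (Qa2 Δ / Qa Δ))
      (nhdsWithin 0 (Set.Ioi 0)) (nhds H) := by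
  obtain ⟨hH0, hH1⟩ := hH
  have hQa' : Qa = variogramQuadForm (K + 1) a v := funext hQa
  have hdilate : ∀ Δ, Qa2 Δ = Qa (2 * Δ) := fun Δ => by
    rw [hQa2, hQa', ← variogramQuadForm_dilate ha2]
    rfl
  have hneg := sum_sum_mul_mul_abs_sub_rpow_neg Nat.cast_injective.injOn hzero hne hH0 hH1
  have hC : sigma ^ 2 / 2 * ∑ k ∈ range (K + 1), ∑ l ∈ range (K + 1),
      a k * a l * |(k : ℝ) - l| ^ (2 * H) ≠ 0 := (mul_neg_of_pos_of_neg (by positivity) hneg).ne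
  have hlim := tendsto_variogramQuadForm_div_rpow hv (K + 1) a
  rw [← hQa'] at hlim
  have hQa_ne : ∀ᶠ Δ in 𝓝[>] 0, Qa Δ ≠ 0 :=
    (hlim.eventually_ne hC).mono fun Δ hΔ hQ => hΔ (by rw [hQ, zero_div])
  refine ⟨fun Δ _ => hdilate Δ, hQa_ne.and ?_, ?_⟩
  · simpa only [hdilate] using eventually_nhdsGT_zero_mul_left two_pos hQa_ne
  · have hratio := tendsto_comp_mul_div_of_tendsto_div_rpow two_pos hC hlim
    simp only [← hdilate] at hratio
    have hlog := (hratio.logb (b := 2) (rpow_pos_of_pos two_pos _).ne').const_mul (1 / 2)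
    rwa [logb_rpow two_pos (by norm_num), ← mul_assoc, one_div_mul_cancel two_ne_zero, one_mul]
      at hlog

/-- Let `a` be a nonzero zero-sum vector, `a²` its dilation, and `v` a
function with `v(t) = (σ²/2) t^{2H} + o(t^{2H})` as `t → 0⁺`. With
`Q_a(Δ) = Σ_{k,ℓ ≤ K} a_k a_ℓ v(|k-ℓ|Δ)` and `Q_{a²}(Δ) = Σ_{k,ℓ ≤ 2K} a²_k a²_ℓ v(|k-ℓ|Δ)`:
`Q_{a²}(Δ) = Q_a(2Δ)` for all `Δ > 0`, both are nonzero for all small enough `Δ > 0`,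
and `(1/2) log₂ (Q_{a²}(Δ)/Q_a(Δ)) → H` as `Δ → 0⁺`. -/
theorem hurst_estimator_population_identity
    (H sigma : ℝ) (hH : H ∈ Set.Ioo (0 : ℝ) 1) (hsigma : 0 < sigma)
    (K : ℕ) (hK : 1 ≤ K) (a : ℕ → ℝ)
    (hzero : ∑ k ∈ Finset.range (K + 1), a k = 0)
    (hne : ∃ k ∈ Finset.range (K + 1), a k ≠ 0)
    (a2 : ℕ → ℝ) (ha2 : ∀ k : ℕ, a2 k = if k % 2 = 0 then a (k / 2) else 0)
    (v : ℝ → ℝ)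
    (hv : (fun t : ℝ => v t - sigma ^ 2 / 2 * t ^ (2 * H))
      =o[nhdsWithin 0 (Set.Ici 0)] (fun t : ℝ => t ^ (2 * H)))
    (Qa Qa2 : ℝ → ℝ)
    (hQa : ∀ Δ : ℝ, Qa Δ = ∑ k ∈ Finset.range (K + 1), ∑ l ∈ Finset.range (K + 1),
      a k * a l * v (|(k : ℝ) - (l : ℝ)| * Δ))
    (hQa2 : ∀ Δ : ℝ, Qa2 Δ = ∑ k ∈ Finset.range (2 * K + 1), ∑ l ∈ Finset.range (2 * K + 1),
      a2 k * a2 l * v (|(k : ℝ) - (l : ℝ)| * Δ)) :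
    (∀ Δ : ℝ, 0 < Δ → Qa2 Δ = Qa (2 * Δ)) ∧
    (∀ᶠ Δ in nhdsWithin (0 : ℝ) (Set.Ioi 0), Qa Δ ≠ 0 ∧ Qa2 Δ ≠ 0) ∧
    Filter.Tendsto (fun Δ : ℝ => (1 / 2) * Real.logb 2 (Qa2 Δ / Qa Δ))
      (nhdsWithin 0 (Set.Ioi 0)) (nhds H) :=
  hurst_estimator_population_identity_general H sigma hH hsigma K a hzero hne a2 ha2 v hv Qa Qa2 hQa
    hQa2
end
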